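/- arXiv:2309.15261 — 2 statements merged into one kernel-verified Lean document; each statement's English description precedes it below -/
import Mathlib

section
/- Let R : c₀₀ → c₀₀ be (R g)(i) = g(2i) and define Λ(f) = { (2·range f) · g : g ∈ c₀₀, R g = f } (restriction of preimages to the doubled range). Define Λ⁰(f) = {f} and Λ^{k+1}(f) = ⋃_{h ∈ Λ^k(f)} Λ(h). Then for every f ∈ c₀₀ and k ≥ 1: Λ^k(f) = { g ∈ c₀₀ : R^k g = f and range(g) = 2^k · range(f) }. -/
open Finsupp

noncomputable section

/-- `S` sends basis vector `e i` to `e (2*i)`. -/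
def S (f : ℕ →₀ ℝ) : ℕ →₀ ℝ :=
  Finsupp.embDomain ⟨fun i => 2 * i, fun a b h => by dsimp only at h; omega⟩ f

/-- `R g` has coordinates `(R g) i = g (2*i)`. -/
def R (g : ℕ →₀ ℝ) : ℕ →₀ ℝ :=
  Finsupp.comapDomain (fun i => 2 * i) g (fun a _ b _ h => by dsimp only at h; omega)

/-- block relation: every element of the support of `u` precedes every element of support of `v`. -/
def Blk (u v : ℕ →₀ ℝ) : Prop :=
  ∀ a ∈ u.support, ∀ b ∈ v.support, a < b

/-- the smallest interval containing the support. -/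
def rng (f : ℕ →₀ ℝ) : Finset ℕ :=
  if h : f.support.Nonempty then Finset.Icc (f.support.min' h) (f.support.max' h) else ∅

/-- dilation of an interval: `m * [r, s] = [m*r, m*s]`. -/
def dil (m : ℕ) (E : Finset ℕ) : Finset ℕ :=
  if h : E.Nonempty then Finset.Icc (m * E.min' h) (m * E.max' h) else ∅

/-- restriction of a vector to a set of coordinates. -/
def restrict (E : Finset ℕ) (g : ℕ →₀ ℝ) : ℕ →₀ ℝ :=
  g.filter (· ∈ E)

/-- `Λ f`: preimages of `f` under `R`, restricted to the doubled range of `f`. -/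
def Lam (f : ℕ →₀ ℝ) : Set (ℕ →₀ ℝ) :=
  {h | ∃ g, R g = f ∧ h = restrict (dil 2 (rng f)) g}

/-- iterates of `Λ`. -/
def LamIter : ℕ → (ℕ →₀ ℝ) → Set (ℕ →₀ ℝ)
  | 0, f => {f}
  | k + 1, f => ⋃ h ∈ LamIter k f, Lam h

/-- the canonical pairing of a functional with a vector. -/
def pair (f x : ℕ →₀ ℝ) : ℝ := ∑ i ∈ f.support, f i * x i

/-- the norm induced by a norming set `K`. -/
def Nrm (K : Set (ℕ →₀ ℝ)) (x : ℕ →₀ ℝ) : ℝ :=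
  sSup {y | ∃ f ∈ K, y = |pair f x|}

end

section Aux

lemma R_app (g : ℕ →₀ ℝ) (i : ℕ) : R g i = g (2 * i) := rfl

lemma restrict_apply' (E : Finset ℕ) (g : ℕ →₀ ℝ) (i : ℕ) :
    restrict E g i = if i ∈ E then g i else 0 := by
  classical
  simp [restrict, Finsupp.filter_apply]

lemma min'_le_max'' (s : Finset ℕ) (h : s.Nonempty) : s.min' h ≤ s.max' h :=
  Finset.min'_le _ _ (Finset.max'_mem _ _)

lemma R_zero : R 0 = (0 : ℕ →₀ ℝ) := by
  ext i
  rw [R_app]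
  simp

lemma rng_zero : rng (0 : ℕ →₀ ℝ) = ∅ := by
  simp [rng]

lemma rng_empty_iff (f : ℕ →₀ ℝ) : rng f = ∅ ↔ f = 0 := by
  constructor
  · intro h
    by_contra hf
    have hs : f.support.Nonempty := Finsupp.support_nonempty_iff.2 hf
    rw [rng, dif_pos hs] at h
    have : f.support.min' hs ∈ (∅ : Finset ℕ) := by
      rw [← h]; exact Finset.mem_Icc.2 ⟨le_rfl, min'_le_max'' _ _⟩
    simp at this
  · rintro rfl; exact rng_zero

lemma support_subset_rng (f : ℕ →₀ ℝ) : f.support ⊆ rng f := by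
  intro i hi
  have hs : f.support.Nonempty := ⟨i, hi⟩
  rw [rng, dif_pos hs]
  exact Finset.mem_Icc.2 ⟨Finset.min'_le _ _ hi, Finset.le_max' _ _ hi⟩

lemma rng_eq_of (g : ℕ →₀ ℝ) (a b : ℕ) (ha : g a ≠ 0) (hb : g b ≠ 0)
    (hsub : ∀ i, g i ≠ 0 → a ≤ i ∧ i ≤ b) : rng g = Finset.Icc a b := by
  have ha' : a ∈ g.support := Finsupp.mem_support_iff.2 ha
  have hb' : b ∈ g.support := Finsupp.mem_support_iff.2 hb
  have hs : g.support.Nonempty := ⟨a, ha'⟩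
  rw [rng, dif_pos hs]
  have hmin : g.support.min' hs = a :=
    le_antisymm (Finset.min'_le _ _ ha')
      (Finset.le_min' _ _ _ fun y hy => (hsub y (Finsupp.mem_support_iff.1 hy)).1)
  have hmax : g.support.max' hs = b :=
    le_antisymm (Finset.max'_le _ _ _ fun y hy => (hsub y (Finsupp.mem_support_iff.1 hy)).2)
      (Finset.le_max' _ _ hb')
  rw [hmin, hmax]

lemma of_rng_eq (g : ℕ →₀ ℝ) (a b : ℕ) (hab : a ≤ b) (h : rng g = Finset.Icc a b) :
    g a ≠ 0 ∧ g b ≠ 0 ∧ ∀ i, g i ≠ 0 → a ≤ i ∧ i ≤ b := by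
  have hne : rng g ≠ ∅ := by
    rw [h]; exact Finset.Nonempty.ne_empty (Finset.nonempty_Icc.2 hab)
  have hg : g ≠ 0 := fun h0 => hne (by rw [h0, rng_zero])
  have hs : g.support.Nonempty := Finsupp.support_nonempty_iff.2 hg
  have hr : rng g = Finset.Icc (g.support.min' hs) (g.support.max' hs) := dif_pos hs
  have hminmem : g.support.min' hs ∈ Finset.Icc a b := by
    rw [← h, hr]; exact Finset.mem_Icc.2 ⟨le_rfl, min'_le_max'' _ _⟩
  have hmaxmem : g.support.max' hs ∈ Finset.Icc a b := by
    rw [← h, hr]; exact Finset.mem_Icc.2 ⟨min'_le_max'' _ _, le_rfl⟩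
  have hamem : a ∈ Finset.Icc (g.support.min' hs) (g.support.max' hs) := by
    rw [← hr, h]; exact Finset.mem_Icc.2 ⟨le_rfl, hab⟩
  have hbmem : b ∈ Finset.Icc (g.support.min' hs) (g.support.max' hs) := by
    rw [← hr, h]; exact Finset.mem_Icc.2 ⟨hab, le_rfl⟩
  have hmin : g.support.min' hs = a :=
    le_antisymm (Finset.mem_Icc.1 hamem).1 (Finset.mem_Icc.1 hminmem).1
  have hmax : g.support.max' hs = b :=
    le_antisymm (Finset.mem_Icc.1 hmaxmem).2 (Finset.mem_Icc.1 hbmem).2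
  refine ⟨?_, ?_, ?_⟩
  · rw [← hmin]; exact Finsupp.mem_support_iff.1 (Finset.min'_mem _ _)
  · rw [← hmax]; exact Finsupp.mem_support_iff.1 (Finset.max'_mem _ _)
  · intro i hi
    have := support_subset_rng g (Finsupp.mem_support_iff.2 hi)
    rw [h] at this
    exact Finset.mem_Icc.1 this

lemma dil_empty (m : ℕ) : dil m ∅ = ∅ := by simp [dil]

lemma dil_Icc (m a b : ℕ) (hab : a ≤ b) :
    dil m (Finset.Icc a b) = Finset.Icc (m * a) (m * b) := by
  have hne : (Finset.Icc a b).Nonempty := Finset.nonempty_Icc.2 hab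
  rw [dil, dif_pos hne]
  have hmin : (Finset.Icc a b).min' hne = a :=
    le_antisymm (Finset.min'_le _ _ (Finset.mem_Icc.2 ⟨le_rfl, hab⟩))
      (Finset.le_min' _ _ _ fun y hy => (Finset.mem_Icc.1 hy).1)
  have hmax : (Finset.Icc a b).max' hne = b :=
    le_antisymm (Finset.max'_le _ _ _ fun y hy => (Finset.mem_Icc.1 hy).2)
      (Finset.le_max' _ _ (Finset.mem_Icc.2 ⟨hab, le_rfl⟩))
  rw [hmin, hmax]

lemma dil_dil (m n : ℕ) (E : Finset ℕ) : dil m (dil n E) = dil (m * n) E := by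
  by_cases hE : E.Nonempty
  · have h1 : dil n E = Finset.Icc (n * E.min' hE) (n * E.max' hE) := dif_pos hE
    have h2 : dil (m * n) E = Finset.Icc (m * n * E.min' hE) (m * n * E.max' hE) := dif_pos hE
    rw [h1, h2, dil_Icc _ _ _ (Nat.mul_le_mul_left n (min'_le_max'' _ _)),
      mul_assoc, mul_assoc]
  · rw [Finset.not_nonempty_iff_eq_empty] at hE
    subst hE
    rw [dil_empty, dil_empty, dil_empty]

lemma restrict_self (E : Finset ℕ) (g : ℕ →₀ ℝ) (h : g.support ⊆ E) :
    restrict E g = g := by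
  ext i
  rw [restrict_apply']
  by_cases hi : g i = 0
  · simp [hi]
  · rw [if_pos (h (Finsupp.mem_support_iff.2 hi))]

/-- key characterization of `Lam`. -/
lemma lam_eq (f : ℕ →₀ ℝ) :
    Lam f = {g : ℕ →₀ ℝ | R g = f ∧ rng g = dil 2 (rng f)} := by
  ext g
  constructor
  · rintro ⟨g', hR, rfl⟩
    by_cases hf : f = 0
    · subst hf
      have h0 : restrict (dil 2 (rng 0)) g' = 0 := by
        ext i; rw [restrict_apply', rng_zero, dil_empty]; simp
      rw [h0]
      exact ⟨R_zero, by rw [rng_zero, dil_empty]⟩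
    · have hs : f.support.Nonempty := Finsupp.support_nonempty_iff.2 hf
      set r := f.support.min' hs with hr
      set s := f.support.max' hs with hsdef
      have hrs : r ≤ s := min'_le_max'' _ _
      have hrngf : rng f = Finset.Icc r s := dif_pos hs
      have hdil : dil 2 (rng f) = Finset.Icc (2 * r) (2 * s) := by
        rw [hrngf, dil_Icc _ _ _ hrs]
      have happ : ∀ i, restrict (dil 2 (rng f)) g' i =
          if 2 * r ≤ i ∧ i ≤ 2 * s then g' i else 0 := by
        intro i
        rw [restrict_apply', hdil]
        simp [Finset.mem_Icc]
      have hsupp : ∀ i, f i ≠ 0 → r ≤ i ∧ i ≤ s := by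
        intro i hi
        have h1 : i ∈ rng f := support_subset_rng f (Finsupp.mem_support_iff.2 hi)
        rw [hrngf] at h1
        exact Finset.mem_Icc.1 h1
      have hRrestrict : R (restrict (dil 2 (rng f)) g') = f := by
        ext i
        rw [R_app, happ]
        by_cases hi : r ≤ i ∧ i ≤ s
        · rw [if_pos (by omega : 2 * r ≤ 2 * i ∧ 2 * i ≤ 2 * s)]
          rw [← R_app, hR]
        · rw [if_neg (by omega : ¬(2 * r ≤ 2 * i ∧ 2 * i ≤ 2 * s))]
          by_contra hne
          exact hi (hsupp i fun h0 => hne h0.symm)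
      refine ⟨hRrestrict, ?_⟩
      rw [hdil]
      apply rng_eq_of
      · rw [restrict_apply', if_pos (Finset.mem_Icc.2 ⟨le_rfl, by omega⟩), ← R_app, hR]
        exact Finsupp.mem_support_iff.1 (Finset.min'_mem _ _)
      · rw [restrict_apply', if_pos (Finset.mem_Icc.2 ⟨by omega, le_rfl⟩), ← R_app, hR]
        exact Finsupp.mem_support_iff.1 (Finset.max'_mem _ _)
      · intro i hi
        rw [restrict_apply'] at hi
        by_contra hc
        rw [if_neg (fun hmem => hc (Finset.mem_Icc.1 hmem))] at hi
        exact hi rfl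
  · rintro ⟨hR, hrng⟩
    refine ⟨g, hR, ?_⟩
    rw [← hrng, restrict_self _ _ (support_subset_rng g)]

/-- range of `R g` when `rng g` is a doubled dilation. -/
lemma rng_R_eq (g : ℕ →₀ ℝ) (m : ℕ) (E : Finset ℕ) (h : rng g = dil (2 * m) E) :
    rng (R g) = dil m E := by
  by_cases hE : E.Nonempty
  · set r := E.min' hE
    set s := E.max' hE
    have hrs : r ≤ s := min'_le_max'' _ _
    have hdil : dil (2 * m) E = Finset.Icc (2 * m * r) (2 * m * s) := dif_pos hE
    rw [hdil] at h
    obtain ⟨ha, hb, hbound⟩ := of_rng_eq g _ _ (by nlinarith) h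
    have hdilm : dil m E = Finset.Icc (m * r) (m * s) := dif_pos hE
    rw [hdilm]
    apply rng_eq_of
    · rw [R_app]; rw [show 2 * (m * r) = 2 * m * r by ring]; exact ha
    · rw [R_app]; rw [show 2 * (m * s) = 2 * m * s by ring]; exact hb
    · intro i hi
      rw [R_app] at hi
      have := hbound _ hi
      constructor <;> nlinarith
  · rw [Finset.not_nonempty_iff_eq_empty] at hE
    subst hE
    rw [dil_empty] at h
    have hg : g = 0 := (rng_empty_iff g).1 h
    subst hg
    rw [R_zero, rng_zero, dil_empty]

end Aux

/-- characterization of `Λ^k f` for `k ≥ 1`. -/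
theorem lamIter_eq (f : ℕ →₀ ℝ) (hf : f ≠ 0) (k : ℕ) (hk : 1 ≤ k) :
    LamIter k f = {g : ℕ →₀ ℝ | R^[k] g = f ∧ rng g = dil (2 ^ k) (rng f)} := by
  induction k, hk using Nat.le_induction with
  | base =>
    have h1 : LamIter 1 f = Lam f := by
      show (⋃ h ∈ LamIter 0 f, Lam h) = Lam f
      show (⋃ h ∈ ({f} : Set (ℕ →₀ ℝ)), Lam h) = Lam f
      simp
    rw [h1, lam_eq]
    simp [pow_one]
  | succ k hk ih =>
    have hstep : LamIter (k + 1) f = ⋃ h ∈ LamIter k f, Lam h := rfl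
    rw [hstep, ih]
    ext g
    simp only [Set.mem_iUnion, Set.mem_setOf_eq, exists_prop]
    constructor
    · rintro ⟨h, ⟨hRk, hrng⟩, hg⟩
      rw [lam_eq] at hg
      obtain ⟨hRg, hrngg⟩ := hg
      constructor
      · rw [Function.iterate_succ_apply, hRg, hRk]
      · rw [hrngg, hrng, dil_dil]
        congr 1
        rw [pow_succ]
        ring
    · rintro ⟨hRk, hrng⟩
      refine ⟨R g, ⟨?_, ?_⟩, ?_⟩
      · rw [← Function.iterate_succ_apply, hRk]
      · apply rng_R_eq
        rw [hrng]
        congr 1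
        rw [pow_succ]
        ring
      · rw [lam_eq]
        refine ⟨rfl, ?_⟩
        have hRrng : rng (R g) = dil (2 ^ k) (rng f) := by
          apply rng_R_eq
          rw [hrng]
          congr 1
          rw [pow_succ]
          ring
        rw [hRrng, dil_dil, hrng]
        congr 1
        rw [pow_succ]
        ring
end

section
/- Let (x_i)_{i=1}^{n} and (f_i)_{i=1}^{n} (n = n_{2j-1}) be block sequences in c₀₀ with range(f_{2i-1}) = range(x_{2i-1}), f_{2i} ∈ Λ^{k_i}(f_{2i-1}), and x_{2i} = S^{k_i}(x_{2i-1}) for some positive integers k_i, i = 1,…,n/2. Suppose there exist positive integers s_i with range(x_{2i-1}) ⊆ [2, 2^{s_i}] and k_i + s_i < k_{i+1} − s_{i+1} for all i. Then for every k ∈ ℕ: (a) there is at most one index i such that h(x_{2i}) ≠ 0 for some h ∈ Λ^k(f_{2i-1}); and (b) there is at most one index s such that (R^k f_{2s})(x_{2s-1}) ≠ 0. -/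
open Finsupp

/-!
A functional in `Λ^K(f)`, with `supp f ⊆ [2, 2^s]`, lives on `[2^K·2, 2^K·2^s]`, while
`S^k x`, with `supp x ⊆ [2, 2^s]`, lives on `2^k·[2, 2^s]`; so `h(S^k x) ≠ 0` forces the dyadic
scales to overlap, `|k - K| < s`. The same window arises for `(R^K g)(x)` with `g ∈ Λ^k(f)`.
Condition (D7) makes the windows `(k_i - s_i, k_i + s_i)` pairwise disjoint, so each `K` lies in
at most one of them.
-/

lemma R_iterate_apply (K : ℕ) (g : ℕ →₀ ℝ) (m : ℕ) : (R^[K] g) m = g (2 ^ K * m) := by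
  induction K generalizing g m with
  | zero => simp
  | succ n ih =>
    rw [Function.iterate_succ_apply, ih]
    change g (2 * (2 ^ n * m)) = _
    rw [pow_succ', mul_assoc]

lemma support_S_iterate_subset (K : ℕ) (f : ℕ →₀ ℝ) :
    (S^[K] f).support ⊆ f.support.image (2 ^ K * ·) := by
  induction K generalizing f with
  | zero => simp
  | succ n ih =>
    intro m hm
    rw [Function.iterate_succ_apply] at hm
    obtain ⟨p, hp, rfl⟩ := Finset.mem_image.mp (ih _ hm)
    rw [S, Finsupp.support_embDomain, Finset.mem_map] at hp
    obtain ⟨q, hq, rfl⟩ := hp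
    exact Finset.mem_image.mpr ⟨q, hq, by change _ = 2 ^ n * (2 * q); ring⟩

lemma rng_subset_Icc {f : ℕ →₀ ℝ} {r t : ℕ} (h : f.support ⊆ Finset.Icc r t) :
    rng f ⊆ Finset.Icc r t := by
  unfold rng
  split_ifs with hne
  · exact Finset.Icc_subset_Icc (Finset.mem_Icc.mp (h (f.support.min'_mem hne))).1
      (Finset.mem_Icc.mp (h (f.support.max'_mem hne))).2
  · exact Finset.empty_subset _

lemma dil_subset_Icc {E : Finset ℕ} {r t : ℕ} (m : ℕ) (h : E ⊆ Finset.Icc r t) :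
    dil m E ⊆ Finset.Icc (m * r) (m * t) := by
  unfold dil
  split_ifs with hne
  · exact Finset.Icc_subset_Icc
      (Nat.mul_le_mul_left m (Finset.mem_Icc.mp (h (E.min'_mem hne))).1)
      (Nat.mul_le_mul_left m (Finset.mem_Icc.mp (h (E.max'_mem hne))).2)
  · exact Finset.empty_subset _

lemma support_restrict_subset (E : Finset ℕ) (g : ℕ →₀ ℝ) : (restrict E g).support ⊆ E := by
  intro m hm
  rw [restrict, Finsupp.support_filter, Finset.mem_filter] at hm
  exact hm.2

lemma support_subset_of_mem_Lam {f h : ℕ →₀ ℝ} {r t : ℕ} (hf : f.support ⊆ Finset.Icc r t)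
    (hh : h ∈ Lam f) : h.support ⊆ Finset.Icc (2 * r) (2 * t) := by
  obtain ⟨g, -, rfl⟩ := hh
  exact (support_restrict_subset _ _).trans (dil_subset_Icc 2 (rng_subset_Icc hf))

lemma support_subset_of_mem_LamIter {K : ℕ} {f h : ℕ →₀ ℝ} {r t : ℕ}
    (hf : f.support ⊆ Finset.Icc r t) (hh : h ∈ LamIter K f) :
    h.support ⊆ Finset.Icc (2 ^ K * r) (2 ^ K * t) := by
  induction K generalizing h with
  | zero =>
    rw [LamIter, Set.mem_singleton_iff] at hh
    simpa [hh] using hf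
  | succ n ih =>
    simp only [LamIter, Set.mem_iUnion] at hh
    obtain ⟨h', hh', hh⟩ := hh
    simpa only [pow_succ', mul_assoc] using support_subset_of_mem_Lam (ih hh') hh

lemma exists_mem_support_of_pair_ne_zero {f x : ℕ →₀ ℝ} (h : pair f x ≠ 0) :
    ∃ m ∈ f.support, m ∈ x.support := by
  by_contra! hc
  exact h (Finset.sum_eq_zero fun m hm => by
    rw [Finsupp.notMem_support_iff.mp (hc m hm), mul_zero])

lemma lt_add_of_pow_mul_mem_Icc {n p q s : ℕ} (hn : n ∈ Finset.Icc 2 (2 ^ s))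
    (h : 2 ^ p * n ∈ Finset.Icc (2 ^ q * 2) (2 ^ q * 2 ^ s)) : p < q + s ∧ q < p + s := by
  rw [Finset.mem_Icc] at hn h
  have hlow : 2 ^ (q + 1) ≤ 2 ^ (p + s) := by
    rw [pow_succ, pow_add]
    exact h.1.trans (Nat.mul_le_mul_left _ hn.2)
  have hupp : 2 ^ (p + 1) ≤ 2 ^ (q + s) := by
    rw [pow_succ, pow_add]
    exact (Nat.mul_le_mul_left _ hn.1).trans h.2
  have h1 := (Nat.pow_le_pow_iff_right (le_refl 2)).mp hupp
  have h2 := (Nat.pow_le_pow_iff_right (le_refl 2)).mp hlow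
  omega

section Window

variable {f x : ℕ →₀ ℝ} {k K s : ℕ}

lemma lt_add_of_pair_S_iterate_ne_zero {h : ℕ →₀ ℝ} (hf : f.support ⊆ Finset.Icc 2 (2 ^ s))
    (hx : x.support ⊆ Finset.Icc 2 (2 ^ s)) (hh : h ∈ LamIter K f)
    (hp : pair h (S^[k] x) ≠ 0) : k < K + s ∧ K < k + s := by
  obtain ⟨m, hmh, hmx⟩ := exists_mem_support_of_pair_ne_zero hp
  obtain ⟨n, hn, rfl⟩ := Finset.mem_image.mp (support_S_iterate_subset k x hmx)
  exact lt_add_of_pow_mul_mem_Icc (hx hn) (support_subset_of_mem_LamIter hf hh hmh)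

lemma lt_add_of_pair_R_iterate_ne_zero {g : ℕ →₀ ℝ} (hf : f.support ⊆ Finset.Icc 2 (2 ^ s))
    (hx : x.support ⊆ Finset.Icc 2 (2 ^ s)) (hg : g ∈ LamIter k f)
    (hp : pair (R^[K] g) x ≠ 0) : k < K + s ∧ K < k + s := by
  obtain ⟨m, hmg, hmx⟩ := exists_mem_support_of_pair_ne_zero hp
  rw [Finsupp.mem_support_iff, R_iterate_apply, ← Finsupp.mem_support_iff] at hmg
  exact (lt_add_of_pow_mul_mem_Icc (hx hmx) (support_subset_of_mem_LamIter hf hg hmg)).symm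

end Window

section Separation

variable {M : ℕ} {k s : Fin M → ℕ}

lemma add_add_lt_of_lt
    (hsep : ∀ i : Fin M, ∀ h : (i : ℕ) + 1 < M, k i + s i + s ⟨(i : ℕ) + 1, h⟩ < k ⟨(i : ℕ) + 1, h⟩)
    {i j : Fin M} (hij : i < j) : k i + s i + s j < k j := by
  obtain ⟨j, hjM⟩ := j
  rw [Fin.lt_def] at hij
  induction j with
  | zero => exact absurd hij (Nat.not_lt_zero _)
  | succ j ih =>
    have hj : j < M := by omega
    have hstep : k ⟨j, hj⟩ + s ⟨j, hj⟩ + s ⟨j + 1, hjM⟩ < k ⟨j + 1, hjM⟩ := hsep ⟨j, hj⟩ hjM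
    rcases Nat.lt_succ_iff_lt_or_eq.mp hij with hlt | heq
    · have := ih hj hlt
      omega
    · obtain rfl : i = ⟨j, hj⟩ := Fin.ext heq
      omega

lemma eq_of_lt_add_of_lt_add
    (hsep : ∀ i : Fin M, ∀ h : (i : ℕ) + 1 < M, k i + s i + s ⟨(i : ℕ) + 1, h⟩ < k ⟨(i : ℕ) + 1, h⟩)
    {K : ℕ} {i j : Fin M} (hi : k i < K + s i ∧ K < k i + s i)
    (hj : k j < K + s j ∧ K < k j + s j) : i = j := by
  rcases lt_trichotomy i j with hij | rfl | hji
  · have := add_add_lt_of_lt hsep hij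
    omega
  · rfl
  · have := add_add_lt_of_lt hsep hji
    omega

end Separation

theorem D7_implies_D5_general (M : ℕ) (a b F G : Fin M → (ℕ →₀ ℝ)) (k s : Fin M → ℕ)
    -- range(f_{2i-1}) = range(x_{2i-1})
    (hrngF : ∀ i, rng (F i) = rng (a i))
    -- f_{2i} ∈ Λ^{k_i}(f_{2i-1}) and x_{2i} = S^{k_i}(x_{2i-1}), with k_i ≥ 1
    (hG : ∀ i, G i ∈ LamIter (k i) (F i))
    (hb : ∀ i, b i = S^[k i] (a i))
    -- (D7): range(x_{2i-1}) ⊆ [2, 2^{s_i}] and k_i + s_i < k_{i+1} - s_{i+1}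
    (hrange : ∀ i, rng (a i) ⊆ Finset.Icc 2 (2 ^ (s i)))
    (hsep : ∀ i : Fin M, ∀ h : (i : ℕ) + 1 < M,
      k i + s i + s ⟨(i : ℕ) + 1, h⟩ < k ⟨(i : ℕ) + 1, h⟩) :
    -- (D5): for every `K ∈ ℕ`,
    ∀ K : ℕ,
      -- (a) at most one index `i` with `h(x_{2i}) ≠ 0` for some `h ∈ Λ^K(f_{2i-1})`
      (∀ i j : Fin M,
        (∃ h ∈ LamIter K (F i), pair h (b i) ≠ 0) →
        (∃ h ∈ LamIter K (F j), pair h (b j) ≠ 0) → i = j) ∧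
      -- (b) at most one index `i` with `(R^K f_{2i})(x_{2i-1}) ≠ 0`
      (∀ i j : Fin M,
        pair (R^[K] (G i)) (a i) ≠ 0 → pair (R^[K] (G j)) (a j) ≠ 0 → i = j) := by
  intro K
  have hsupp_a : ∀ i, (a i).support ⊆ Finset.Icc 2 (2 ^ s i) := fun i =>
    (support_subset_rng _).trans (hrange i)
  have hsupp_F : ∀ i, (F i).support ⊆ Finset.Icc 2 (2 ^ s i) := fun i =>
    (support_subset_rng _).trans (hrngF i ▸ hrange i)
  refine ⟨fun i j ⟨h, hh, hp⟩ ⟨h', hh', hp'⟩ => ?_, fun i j hp hp' => ?_⟩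
  · rw [hb] at hp hp'
    exact eq_of_lt_add_of_lt_add hsep
      (lt_add_of_pair_S_iterate_ne_zero (hsupp_F i) (hsupp_a i) hh hp)
      (lt_add_of_pair_S_iterate_ne_zero (hsupp_F j) (hsupp_a j) hh' hp')
  · exact eq_of_lt_add_of_lt_add hsep
      (lt_add_of_pair_R_iterate_ne_zero (hsupp_F i) (hsupp_a i) (hG i) hp)
      (lt_add_of_pair_R_iterate_ne_zero (hsupp_F j) (hsupp_a j) (hG j) hp')

/-- Lemma "(D7) implies (D5)". The pairs are indexed by `i : Fin M`:
`a i = x_{2i-1}`, `b i = x_{2i}`, `F i = f_{2i-1}`, `G i = f_{2i}`. -/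
theorem D7_implies_D5 (M : ℕ) (a b F G : Fin M → (ℕ →₀ ℝ)) (k s : Fin M → ℕ)
    -- the interleaved sequences are block sequences
    (hab : ∀ i : Fin M, Blk (a i) (b i))
    (hba : ∀ i : Fin M, ∀ h : (i : ℕ) + 1 < M, Blk (b i) (a ⟨(i : ℕ) + 1, h⟩))
    (hFG : ∀ i : Fin M, Blk (F i) (G i))
    (hGF : ∀ i : Fin M, ∀ h : (i : ℕ) + 1 < M, Blk (G i) (F ⟨(i : ℕ) + 1, h⟩))
    -- range(f_{2i-1}) = range(x_{2i-1})
    (hrngF : ∀ i, rng (F i) = rng (a i))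
    -- f_{2i} ∈ Λ^{k_i}(f_{2i-1}) and x_{2i} = S^{k_i}(x_{2i-1}), with k_i ≥ 1
    (hk : ∀ i, 1 ≤ k i)
    (hG : ∀ i, G i ∈ LamIter (k i) (F i))
    (hb : ∀ i, b i = S^[k i] (a i))
    -- (D7): range(x_{2i-1}) ⊆ [2, 2^{s_i}] and k_i + s_i < k_{i+1} - s_{i+1}
    (hs : ∀ i, 1 ≤ s i)
    (hrange : ∀ i, rng (a i) ⊆ Finset.Icc 2 (2 ^ (s i)))
    (hsep : ∀ i : Fin M, ∀ h : (i : ℕ) + 1 < M,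
      k i + s i + s ⟨(i : ℕ) + 1, h⟩ < k ⟨(i : ℕ) + 1, h⟩) :
    -- (D5): for every `K ∈ ℕ`,
    ∀ K : ℕ,
      -- (a) at most one index `i` with `h(x_{2i}) ≠ 0` for some `h ∈ Λ^K(f_{2i-1})`
      (∀ i j : Fin M,
        (∃ h ∈ LamIter K (F i), pair h (b i) ≠ 0) →
        (∃ h ∈ LamIter K (F j), pair h (b j) ≠ 0) → i = j) ∧
      -- (b) at most one index `i` with `(R^K f_{2i})(x_{2i-1}) ≠ 0`
      (∀ i j : Fin M,
        pair (R^[K] (G i)) (a i) ≠ 0 → pair (R^[K] (G j)) (a j) ≠ 0 → i = j) :=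
  D7_implies_D5_general M a b F G k s hrngF hG hb hrange hsep
end
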